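/- arXiv:1912.10464 — 3 statements merged into one kernel-verified Lean document; each statement's English description precedes it below -/
import Mathlib

section
/- Let B > 0, δ > 0, M ≥ 0, a starting level s₀ ∈ [0,B], a demand sequence D : ℕ → ℝ, and a cost function C : ℝ → ℝ that is Lipschitz with constant M. Then the δ-step discretization of the storage-control dynamic program incurs an optimization error of at most M·τ·δ: for every horizon τ ≥ 1 and every state s ∈ [0,B], |μ τ s − μ̃ τ s| ≤ M·τ·δ, where μ is the exact value function and μ̃ is the value function computed over the δ-grid. -/
/-!
Restricting the infimum to the grid can only raise it, so `μ ≤ μt`. Conversely,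
`μt τ q ≤ μ τ u + M τ δ` whenever `q ≤ u ≤ q + δ`, by induction on `τ`: a continuous
decision `v` is replaced by the grid point `w ≤ v` just below it. Moving state and decision
together keeps `v - w - (u - q)` in `[-δ, δ]`, so the argument of `C` moves by at most `δ`
and each stage costs at most `M δ`. The value functions inherit the Lipschitz constant of
`C`, which keeps all the infima over subsets of the compact `[0, B]` bounded below.
-/

open Set
open scoped NNReal

noncomputable def bellman (C : ℝ → ℝ) (d : ℝ) (S : Set ℝ) (f : ℝ → ℝ) (s : ℝ) : ℝ :=
  ⨅ s' : S, C (s - s' + d) + f s'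

structure IsValueFn (C : ℝ → ℝ) (D : ℕ → ℝ) (s₀ : ℝ) (S : Set ℝ) (V : ℕ → ℝ → ℝ) : Prop where
  one : ∀ s, V 1 s = C (s - s₀ + D 1)
  succ : ∀ τ, 1 ≤ τ → V (τ + 1) = bellman C (D (τ + 1)) S (V τ)

theorem exists_mem_grid_le_le_add {B δ v : ℝ} (hδ : 0 < δ) (hv : v ∈ Icc 0 B) :
    ∃ w ∈ {x : ℝ | ∃ k : ℕ, x = k * δ} ∩ Icc 0 B, w ≤ v ∧ v ≤ w + δ := by
  set k := ⌊v / δ⌋₊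
  have hle : k * δ ≤ v := (le_div_iff₀ hδ).1 (Nat.floor_le (div_nonneg hv.1 hδ.le))
  have hlt : v < (k + 1) * δ := (div_lt_iff₀ hδ).1 (Nat.lt_floor_add_one _)
  exact ⟨k * δ, ⟨⟨k, rfl⟩, by positivity, hle.trans hv.2⟩, hle, by linarith⟩

section Bellman

variable {C f g : ℝ → ℝ} {K : ℝ≥0} {S G : Set ℝ} {a b d δ ε q u : ℝ}

theorem bddBelow_range_bellman (hC : Continuous C) (hf : Continuous f) (hS : S ⊆ Icc a b)
    (s : ℝ) : BddBelow (range fun s' : S => C (s - s' + d) + f s') := by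
  have hIcc := (isCompact_Icc (a := a) (b := b)).bddBelow_image
    (f := fun s' => C (s - s' + d) + f s') (by fun_prop)
  exact hIcc.mono (by rintro _ ⟨s', rfl⟩; exact mem_image_of_mem _ (hS s'.2))

theorem lipschitzWith_bellman (hC : LipschitzWith K C) (hS : S ⊆ Icc a b) (hf : Continuous f) :
    LipschitzWith K (bellman C d S f) := by
  cases isEmpty_or_nonempty S with
  | inl _ =>
    have h0 : bellman C d S f = fun _ => 0 := funext fun _ => Real.iInf_of_isEmpty _
    exact h0 ▸ (LipschitzWith.const 0).weaken zero_le
  | inr _ =>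
    refine .of_le_add_mul K fun x y => ?_
    rw [← sub_le_iff_le_add]
    refine le_ciInf fun s' => ?_
    have hx : bellman C d S f x ≤ C (x - s' + d) + f s' :=
      ciInf_le (bddBelow_range_bellman hC.continuous hf hS x) s'
    have hC' : C (x - s' + d) ≤ C (y - s' + d) + K * dist x y := by
      simpa [dist_add_right, dist_sub_right] using hC.le_add_mul (x - s' + d) (y - s' + d)
    linarith

theorem bellman_le_bellman_of_subset [Nonempty G] (hGS : G ⊆ S) {s : ℝ}
    (hbdd : BddBelow (range fun s' : S => C (s - s' + d) + f s'))
    (hfg : ∀ w ∈ G, f w ≤ g w) : bellman C d S f s ≤ bellman C d G g s :=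
  le_ciInf fun w => (ciInf_le hbdd ⟨w, hGS w.2⟩).trans (add_le_add_right (hfg w w.2) _)

theorem bellman_le_bellman_add [Nonempty S] (hC : LipschitzWith K C)
    (hbdd : BddBelow (range fun w : G => C (q - w + d) + g w))
    (hround : ∀ v ∈ S, ∃ w ∈ G, w ≤ v ∧ v ≤ w + δ)
    (hfg : ∀ u q, q ≤ u → u ≤ q + δ → g q ≤ f u + ε) (hqu : q ≤ u) (huq : u ≤ q + δ) :
    bellman C d G g q ≤ bellman C d S f u + (ε + K * δ) := by
  rw [← sub_le_iff_le_add]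
  refine le_ciInf fun v => ?_
  obtain ⟨w, hwG, hwv, hvw⟩ := hround v v.2
  have hq : bellman C d G g q ≤ C (q - w + d) + g w := ciInf_le hbdd ⟨w, hwG⟩
  have hcost : C (q - w + d) ≤ C (u - v + d) + K * δ := by
    refine (hC.le_add_mul _ _).trans (add_le_add_right (mul_le_mul_of_nonneg_left ?_ K.2) _)
    rw [Real.dist_eq, abs_le]
    constructor <;> linarith
  have hval := hfg v w hwv hvw
  linarith

end Bellman

namespace IsValueFn

variable {C : ℝ → ℝ} {D : ℕ → ℝ} {K : ℝ≥0} {S G : Set ℝ} {a b δ s₀ : ℝ} {V W : ℕ → ℝ → ℝ}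

theorem lipschitzWith (hV : IsValueFn C D s₀ S V) (hC : LipschitzWith K C) (hS : S ⊆ Icc a b) :
    ∀ τ, 1 ≤ τ → LipschitzWith K (V τ) := by
  refine Nat.le_induction ?_ fun τ hτ ih => ?_
  · refine .of_le_add_mul K fun x y => ?_
    simpa [hV.one, dist_add_right, dist_sub_right] using
      hC.le_add_mul (x - s₀ + D 1) (y - s₀ + D 1)
  · rw [hV.succ τ hτ]
    exact lipschitzWith_bellman hC hS ih.continuous

theorem le_of_subset [Nonempty G] (hV : IsValueFn C D s₀ S V) (hW : IsValueFn C D s₀ G W)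
    (hC : LipschitzWith K C) (hS : S ⊆ Icc a b) (hGS : G ⊆ S) :
    ∀ τ, 1 ≤ τ → V τ ≤ W τ := by
  refine Nat.le_induction (fun s => by rw [hV.one, hW.one]) fun τ hτ ih s => ?_
  rw [hV.succ τ hτ, hW.succ τ hτ]
  exact bellman_le_bellman_of_subset hGS
    (bddBelow_range_bellman hC.continuous (hV.lipschitzWith hC hS τ hτ).continuous hS s)
    fun w _ => ih w

theorem le_add_of_round [Nonempty S] (hV : IsValueFn C D s₀ S V) (hW : IsValueFn C D s₀ G W)
    (hC : LipschitzWith K C) (hG : G ⊆ Icc a b)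
    (hround : ∀ v ∈ S, ∃ w ∈ G, w ≤ v ∧ v ≤ w + δ) :
    ∀ τ, 1 ≤ τ → ∀ u q, q ≤ u → u ≤ q + δ → W τ q ≤ V τ u + K * τ * δ := by
  refine Nat.le_induction ?_ fun τ hτ ih u q hqu huq => ?_
  · intro u q hqu huq
    have hdist : dist (q - s₀ + D 1) (u - s₀ + D 1) ≤ δ := by
      rw [dist_add_right, dist_sub_right, Real.dist_eq, abs_le]
      constructor <;> linarith
    rw [hV.one, hW.one, Nat.cast_one, mul_one]
    exact (hC.le_add_mul _ _).trans (add_le_add_right (mul_le_mul_of_nonneg_left hdist K.2) _)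
  · rw [hV.succ τ hτ, hW.succ τ hτ, Nat.cast_succ, mul_add_one, add_mul]
    exact bellman_le_bellman_add hC
      (bddBelow_range_bellman hC.continuous (hW.lipschitzWith hC hG τ hτ).continuous hG q)
      hround ih hqu huq

end IsValueFn

theorem delta_discretization_error_general
    (B δ M s₀ : ℝ) (hδ : 0 < δ) (hM : 0 ≤ M)
    (D : ℕ → ℝ) (C : ℝ → ℝ)
    (hC : ∀ x y : ℝ, |C x - C y| ≤ M * |x - y|)
    (G : Set ℝ) (hG : G = {x : ℝ | ∃ k : ℕ, x = (k : ℝ) * δ} ∩ Set.Icc (0 : ℝ) B)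
    (μ μt : ℕ → ℝ → ℝ)
    (hμ1 : ∀ s : ℝ, μ 1 s = C (s - s₀ + D 1))
    (hμrec : ∀ τ : ℕ, 1 ≤ τ → ∀ s : ℝ,
      μ (τ + 1) s = ⨅ s' : Set.Icc (0 : ℝ) B, (C (s - (s' : ℝ) + D (τ + 1)) + μ τ (s' : ℝ)))
    (hμt1 : ∀ s : ℝ, μt 1 s = C (s - s₀ + D 1))
    (hμtrec : ∀ τ : ℕ, 1 ≤ τ → ∀ s : ℝ,
      μt (τ + 1) s = ⨅ s' : G, (C (s - (s' : ℝ) + D (τ + 1)) + μt τ (s' : ℝ))) :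
    ∀ τ : ℕ, 1 ≤ τ → ∀ s ∈ Set.Icc (0 : ℝ) B,
      |μ τ s - μt τ s| ≤ M * (τ : ℝ) * δ := by
  intro τ hτ s hs
  subst hG
  have hB : 0 ≤ B := hs.1.trans hs.2
  have hCK : LipschitzWith ⟨M, hM⟩ C :=
    .of_dist_le_mul fun x y => by rw [Real.dist_eq, Real.dist_eq]; exact hC x y
  have hμV : IsValueFn C D s₀ (Icc 0 B) μ := ⟨hμ1, fun τ hτ => funext (hμrec τ hτ)⟩
  have hμtV : IsValueFn C D s₀ _ μt := ⟨hμt1, fun τ hτ => funext (hμtrec τ hτ)⟩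
  have : Nonempty (Icc (0 : ℝ) B) := ⟨⟨0, left_mem_Icc.2 hB⟩⟩
  have : Nonempty ({x : ℝ | ∃ k : ℕ, x = k * δ} ∩ Icc 0 B : Set ℝ) :=
    ⟨⟨0, ⟨0, by simp⟩, left_mem_Icc.2 hB⟩⟩
  have hle := hμV.le_of_subset hμtV hCK subset_rfl inter_subset_right τ hτ s
  have hge : μt τ s ≤ μ τ s + M * τ * δ := hμV.le_add_of_round hμtV hCK inter_subset_right
    (fun _ hv => exists_mem_grid_le_le_add hδ hv) τ hτ s s le_rfl (le_add_of_nonneg_right hδ.le)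
  have hbound : 0 ≤ M * τ * δ := by positivity
  rw [abs_sub_le_iff]
  constructor <;> linarith

/-- Lemma 1 of the paper.
For a storage-control dynamic program with exact value function `μ` (infimum of the
Bellman recursion over the continuous state space `[0,B]`) and discretized value
function `μt` (same recursion, but with the minimization restricted to the δ-grid
`G = {kδ : k ∈ ℕ} ∩ [0,B]`), the `δ`-step discretization incurs an optimization error
of at most `M·τ·δ`, where `M` is a Lipschitz constant of the cost `C`. -/
theorem delta_discretization_error
    (B δ M s₀ : ℝ) (hB : 0 < B) (hδ : 0 < δ) (hM : 0 ≤ M)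
    (hs₀ : s₀ ∈ Set.Icc (0 : ℝ) B)
    (D : ℕ → ℝ) (C : ℝ → ℝ)
    (hC : ∀ x y : ℝ, |C x - C y| ≤ M * |x - y|)
    (G : Set ℝ) (hG : G = {x : ℝ | ∃ k : ℕ, x = (k : ℝ) * δ} ∩ Set.Icc (0 : ℝ) B)
    (μ μt : ℕ → ℝ → ℝ)
    (hμ1 : ∀ s : ℝ, μ 1 s = C (s - s₀ + D 1))
    (hμrec : ∀ τ : ℕ, 1 ≤ τ → ∀ s : ℝ,
      μ (τ + 1) s = ⨅ s' : Set.Icc (0 : ℝ) B, (C (s - (s' : ℝ) + D (τ + 1)) + μ τ (s' : ℝ)))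
    (hμt1 : ∀ s : ℝ, μt 1 s = C (s - s₀ + D 1))
    (hμtrec : ∀ τ : ℕ, 1 ≤ τ → ∀ s : ℝ,
      μt (τ + 1) s = ⨅ s' : G, (C (s - (s' : ℝ) + D (τ + 1)) + μt τ (s' : ℝ))) :
    ∀ τ : ℕ, 1 ≤ τ → ∀ s ∈ Set.Icc (0 : ℝ) B,
      |μ τ s - μt τ s| ≤ M * (τ : ℝ) * δ :=
  delta_discretization_error_general B δ M s₀ hδ hM D C hC G hG μ μt hμ1 hμrec hμt1 hμtrec
end

section
/- Merit-order dispatch is optimal for the economic dispatch linear program: let n ≥ 1, let ḡ : Fin n → ℝ be nonnegative capacities, and let MF : Fin n → ℝ be fuel costs that are monotone nondecreasing in the index (the generators are listed in merit order). Then for every demand x with 0 ≤ x ≤ ∑_{i} ḡ i, the minimum of ∑_{i} MF i · g i over all g : Fin n → ℝ with 0 ≤ g i ≤ ḡ i for all i and ∑_{i} g i = x equals ∑_{i} MF i · min( ḡ i, max( 0, x − ∑_{j < i} ḡ j ) ), i.e., the cost of filling the generators greedily in merit order. -/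
private lemma greedy_step (x a c : ℝ) (hc : 0 ≤ c) :
    min x a + min c (max 0 (x - a)) = min x (a + c) := by
  rcases le_total x a with h | h
  · rw [min_eq_left h, min_eq_left (le_add_of_le_of_nonneg h hc)]
    simp [max_eq_left (sub_nonpos.mpr h), min_eq_right hc]
  · rw [min_eq_right h, max_eq_right (sub_nonneg.mpr h)]
    rcases le_total c (x - a) with h2 | h2
    · rw [min_eq_left h2, min_eq_right (by linarith)]
    · rw [min_eq_right h2, min_eq_left (by linarith)]; ring

/-- merit-order dispatch is optimal for economic dispatch.
With generators listed in merit order (fuel costs `MF` nondecreasing in the index)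
and nonnegative capacities `gbar`, for every feasible demand `x` the minimum fuel cost
`min { ∑ MF i · g i : 0 ≤ g ≤ gbar, ∑ g = x }` is attained by the greedy merit-order
dispatch, with value `∑ i, MF i · min (gbar i) (max 0 (x − ∑_{j<i} gbar j))`. -/
theorem merit_order_dispatch_optimal
    (n : ℕ) (hn : 1 ≤ n)
    (gbar MF : Fin n → ℝ)
    (hg : ∀ i, 0 ≤ gbar i) (hMF : Monotone MF)
    (x : ℝ) (hx0 : 0 ≤ x) (hx1 : x ≤ ∑ i, gbar i) :
    IsLeast
      {v : ℝ | ∃ g : Fin n → ℝ,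
        (∀ i, 0 ≤ g i ∧ g i ≤ gbar i) ∧ (∑ i, g i) = x ∧ v = ∑ i, MF i * g i}
      (∑ i, MF i * min (gbar i) (max 0 (x - ∑ j ∈ Finset.Iio i, gbar j))) := by
  classical
  set gbar' : ℕ → ℝ := fun k => if h : k < n then gbar ⟨k, h⟩ else 0 with hgbar'
  set S : ℕ → ℝ := fun k => ∑ j ∈ Finset.range k, gbar' j with hSdef
  set gs : ℕ → ℝ := fun k => min (gbar' k) (max 0 (x - S k)) with hgsdef
  have hgbar'nn : ∀ k, 0 ≤ gbar' k := by
    intro k; by_cases h : k < n <;> simp [hgbar', h, hg]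
  -- Iio sums as range sums
  have hIio : ∀ i : Fin n, ∑ j ∈ Finset.Iio i, gbar j = S i.val := by
    intro i
    rw [hSdef]
    refine Finset.sum_nbij' (fun j => (j : ℕ))
      (fun k => if h : k < n then ⟨k, h⟩ else i) ?_ ?_ ?_ ?_ ?_
    · intro a ha; simp only [Finset.mem_Iio, Fin.lt_def] at ha
      simpa using ha
    · intro a ha; simp only [Finset.mem_range] at ha
      have h : a < n := lt_trans ha i.isLt
      simp [h, Finset.mem_Iio, Fin.lt_def, ha]
    · intro a ha; simp [a.isLt]
    · intro a ha; simp only [Finset.mem_range] at ha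
      simp [lt_trans ha i.isLt]
    · intro a ha; simp [a.isLt, hgbar']
  have hpart : ∀ k, ∑ j ∈ Finset.range k, gs j = min x (S k) := by
    intro k
    induction k with
    | zero => simp [hSdef, min_eq_right hx0]
    | succ k ih =>
      rw [Finset.sum_range_succ, ih, hgsdef]
      have : S (k + 1) = S k + gbar' k := by rw [hSdef]; exact Finset.sum_range_succ _ _
      rw [this]
      exact greedy_step x (S k) (gbar' k) (hgbar'nn k)
  have hSn : (∑ i, gbar i) = S n := by
    show _ = ∑ j ∈ Finset.range n, gbar' j
    rw [← Fin.sum_univ_eq_sum_range]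
    exact Finset.sum_congr rfl fun i _ => by simp [hgbar', i.isLt]
  have hgs_bounds : ∀ i : Fin n, 0 ≤ gs i.val ∧ gs i.val ≤ gbar i := by
    intro i
    constructor
    · exact le_min (hgbar'nn _) (le_max_left _ _)
    · have h1 : gbar' i.val = gbar i := by simp [hgbar', i.isLt]
      calc gs i.val ≤ gbar' i.val := min_le_left _ _
        _ = gbar i := h1
  have hgs_sum : (∑ i : Fin n, gs i.val) = x := by
    rw [Fin.sum_univ_eq_sum_range, hpart n, ← hSn, min_eq_left hx1]
  have hval : (∑ i, MF i * min (gbar i) (max 0 (x - ∑ j ∈ Finset.Iio i, gbar j)))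
      = ∑ i : Fin n, MF i * gs i.val := by
    refine Finset.sum_congr rfl fun i _ => ?_
    have h1 : gbar' i.val = gbar i := by simp [hgbar', i.isLt]
    rw [hIio i]
    show MF i * min (gbar i) _ = MF i * min (gbar' i.val) _
    rw [h1]
  constructor
  · exact ⟨fun i => gs i.val, hgs_bounds, hgs_sum, hval⟩
  · rintro v ⟨g, hgb, hgsum, rfl⟩
    set g' : ℕ → ℝ := fun k => if h : k < n then g ⟨k, h⟩ else 0 with hg'def
    set MF' : ℕ → ℝ := fun k => MF ⟨min k (n - 1), by omega⟩ with hMF'def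
    have hMF' : Monotone MF' := by
      intro a b hab
      exact hMF (by simp [Fin.le_def]; omega)
    have hMFeq : ∀ i : Fin n, MF' i.val = MF i := by
      intro i
      have h := i.isLt
      exact congrArg MF (Fin.ext (show min i.val (n - 1) = i.val by omega))
    have hg'nn : ∀ k, 0 ≤ g' k := by
      intro k; by_cases h : k < n <;> simp [hg'def, h, (hgb ⟨k, _⟩).1]
    have hg'le : ∀ k, g' k ≤ gbar' k := by
      intro k; by_cases h : k < n <;> simp [hg'def, hgbar', h, (hgb ⟨k, _⟩).2]
    have hg'x : ∑ j ∈ Finset.range n, g' j = x := by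
      rw [← hgsum, ← Fin.sum_univ_eq_sum_range]
      exact Finset.sum_congr rfl fun i _ => by simp [hg'def, i.isLt]
    set d : ℕ → ℝ := fun k => g' k - gs k with hddef
    have hD : ∀ k, ∑ j ∈ Finset.range k, d j ≤ 0 := by
      intro k
      have h1 : ∑ j ∈ Finset.range k, g' j ≤ S k := by
        rw [hSdef]; exact Finset.sum_le_sum fun j _ => hg'le j
      have h2 : ∑ j ∈ Finset.range k, g' j ≤ x := by
        calc ∑ j ∈ Finset.range k, g' j ≤ ∑ j ∈ Finset.range (max k n), g' j :=
              Finset.sum_le_sum_of_subset_of_nonneg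
                (Finset.range_subset_range.mpr (le_max_left _ _)) (fun j _ _ => hg'nn j)
          _ = ∑ j ∈ Finset.range n, g' j := by
              refine (Finset.sum_subset (Finset.range_subset_range.mpr (le_max_right _ _)) ?_).symm
              intro j _ hj
              simp only [Finset.mem_range, not_lt] at hj
              simp [hg'def, Nat.not_lt.mpr hj]
          _ = x := hg'x
      have : ∑ j ∈ Finset.range k, d j
          = (∑ j ∈ Finset.range k, g' j) - min x (S k) := by
        simp only [hddef]
        rw [Finset.sum_sub_distrib, hpart k]
      rw [this]
      rcases le_total x (S k) with h | h
      · rw [min_eq_left h]; linarith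
      · rw [min_eq_right h]; linarith
    have hDn : ∑ j ∈ Finset.range n, d j = 0 := by
      simp only [hddef]
      rw [Finset.sum_sub_distrib, hg'x, hpart n, ← hSn, min_eq_left hx1]
      ring
    have key : ∑ i ∈ Finset.range n, MF' i * d i =
        MF' (n - 1) * (∑ j ∈ Finset.range n, d j)
          - ∑ i ∈ Finset.range (n - 1), (MF' (i + 1) - MF' i)
              * (∑ j ∈ Finset.range (i + 1), d j) := by
      simpa [smul_eq_mul] using Finset.sum_range_by_parts MF' d n
    have hnonneg : 0 ≤ ∑ i ∈ Finset.range n, MF' i * d i := by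
      rw [key, hDn, mul_zero, zero_sub, neg_nonneg]
      refine Finset.sum_nonpos fun i _ => ?_
      exact mul_nonpos_of_nonneg_of_nonpos (by linarith [hMF' (Nat.le_succ i)]) (hD (i + 1))
    have hcost : (∑ i, MF i * g i) - (∑ i : Fin n, MF i * gs i.val)
        = ∑ i ∈ Finset.range n, MF' i * d i := by
      have e1 : (∑ i, MF i * g i) = ∑ i ∈ Finset.range n, MF' i * g' i := by
        rw [← Fin.sum_univ_eq_sum_range]
        exact Finset.sum_congr rfl fun i _ => by
          rw [hMFeq i]; simp [hg'def, i.isLt]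
      have e2 : (∑ i : Fin n, MF i * gs i.val) = ∑ i ∈ Finset.range n, MF' i * gs i := by
        rw [← Fin.sum_univ_eq_sum_range]
        exact Finset.sum_congr rfl fun i _ => by rw [hMFeq i]
      rw [e1, e2, ← Finset.sum_sub_distrib]
      exact Finset.sum_congr rfl fun i _ => by simp only [hddef]; ring
    rw [hval]
    linarith [hcost, hnonneg]
end

section
/- The total social cost under merit-order dispatch can be non-convex: let two generators have capacities ḡ₁ > 0 and ḡ₂ > 0, marginal fuel costs MF₁ < MF₂ (so the merit order is (1,2)), and marginal carbon costs MC₁, MC₂ ≥ 0 with MF₁ + MC₁ > MF₂ + MC₂. Define the total social cost C(x) = (MF₁ + MC₁) · min(x, ḡ₁) + (MF₂ + MC₂) · max(0, min(x − ḡ₁, ḡ₂)) for x ∈ [0, ḡ₁ + ḡ₂]. Then C is not convex on [0, ḡ₁ + ḡ₂]. -/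
/-!
Merit order fills generator 1 first, so the cost is piecewise linear with slope
`MF1 + MC1` on `[0, g1]` and slope `MF2 + MC2` on `[g1, g1 + g2]`. Convexity forces the
slopes of adjacent chords to increase, which the carbon costs reverse.
-/

noncomputable def twoStepCost (g1 g2 p1 p2 x : ℝ) : ℝ :=
  p1 * min x g1 + p2 * max 0 (min (x - g1) g2)

section twoStepCost

variable {g1 g2 : ℝ} (p1 p2 : ℝ)

theorem twoStepCost_zero (hg1 : 0 ≤ g1) : twoStepCost g1 g2 p1 p2 0 = 0 := by
  simp [twoStepCost, hg1]

theorem twoStepCost_self : twoStepCost g1 g2 p1 p2 g1 = p1 * g1 := by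
  simp [twoStepCost]

theorem twoStepCost_add (hg2 : 0 ≤ g2) :
    twoStepCost g1 g2 p1 p2 (g1 + g2) = p1 * g1 + p2 * g2 := by
  simp [twoStepCost, hg2]

theorem le_of_convexOn_twoStepCost (hg1 : 0 < g1) (hg2 : 0 < g2) {C : ℝ → ℝ}
    (hC : Set.EqOn C (twoStepCost g1 g2 p1 p2) (Set.Icc 0 (g1 + g2)))
    (hconv : ConvexOn ℝ (Set.Icc 0 (g1 + g2)) C) : p1 ≤ p2 := by
  have h0 : (0 : ℝ) ∈ Set.Icc 0 (g1 + g2) := ⟨le_rfl, by linarith⟩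
  have hg : g1 ∈ Set.Icc 0 (g1 + g2) := ⟨hg1.le, by linarith⟩
  have htot : g1 + g2 ∈ Set.Icc 0 (g1 + g2) := ⟨by linarith, le_rfl⟩
  have hslope := hconv.slope_mono_adjacent h0 htot hg1 (lt_add_of_pos_right g1 hg2)
  rwa [hC h0, hC hg, hC htot, twoStepCost_zero p1 p2 hg1.le, twoStepCost_self,
    twoStepCost_add p1 p2 hg2.le, sub_zero, sub_zero, add_sub_cancel_left,
    add_sub_cancel_left, mul_div_cancel_right₀ _ hg1.ne',
    mul_div_cancel_right₀ _ hg2.ne'] at hslope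

end twoStepCost

theorem social_cost_not_convex_general
    (g1 g2 MF1 MF2 MC1 MC2 : ℝ)
    (hg1 : 0 < g1) (hg2 : 0 < g2)
    (hflip : MF2 + MC2 < MF1 + MC1)
    (C : ℝ → ℝ)
    (hC : ∀ x ∈ Set.Icc (0 : ℝ) (g1 + g2),
      C x = (MF1 + MC1) * min x g1 + (MF2 + MC2) * max 0 (min (x - g1) g2)) :
    ¬ ConvexOn ℝ (Set.Icc (0 : ℝ) (g1 + g2)) C := fun hconv =>
  hflip.not_ge (le_of_convexOn_twoStepCost _ _ hg1 hg2 hC hconv)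

/-- the merit-order total social cost can be non-convex.
Two generators with capacities `g1, g2 > 0`, fuel costs `MF1 < MF2` (so the merit
order is (1,2)), and carbon costs `MC1, MC2 ≥ 0` with `MF1 + MC1 > MF2 + MC2`.
The total social cost
`C x = (MF1 + MC1)·min x g1 + (MF2 + MC2)·max 0 (min (x − g1) g2)`
is not convex on `[0, g1 + g2]`. -/
theorem social_cost_not_convex
    (g1 g2 MF1 MF2 MC1 MC2 : ℝ)
    (hg1 : 0 < g1) (hg2 : 0 < g2)
    (hMF : MF1 < MF2) (hMC1 : 0 ≤ MC1) (hMC2 : 0 ≤ MC2)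
    (hflip : MF2 + MC2 < MF1 + MC1)
    (C : ℝ → ℝ)
    (hC : ∀ x ∈ Set.Icc (0 : ℝ) (g1 + g2),
      C x = (MF1 + MC1) * min x g1 + (MF2 + MC2) * max 0 (min (x - g1) g2)) :
    ¬ ConvexOn ℝ (Set.Icc (0 : ℝ) (g1 + g2)) C :=
  social_cost_not_convex_general g1 g2 MF1 MF2 MC1 MC2 hg1 hg2 hflip C hC
end
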